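/- arXiv:2103.01887 — 2 statements merged into one kernel-verified Lean document; each statement's English description precedes it below -/
import Mathlib

section
/- Let X be a random vector in ℝ^d and C, c₀, s > 0 be such that P(‖X‖₂² ≤ C·d) ≥ 1 − exp(−c₀·d) and M₁(s) := sup_{‖w‖₂=1} E[exp(s·w^T X)] < ∞, M₂(s) := sup_{‖w‖₂=1} E[exp(−s·w^T X)] < ∞. Define λ(d) := sup_{w ∈ ℝ^d, ‖w‖₂ = 1/√(Cd)} E[ |w^T X|² · 1{‖X‖₂² > C·d} ]. Then λ(d) ≤ (1/(C·d)) · √(2048·(M₁(s) + M₂(s))/s⁴) · exp(−c₀·d/2). In particular, if C, s, M₁(s), M₂(s) are bounded independently of d, then λ(d) ≤ exp(−c'·d) for some constant c' > 0 and all sufficiently large d. -/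
/-! The elementary inequality `x⁴ ≤ 24 (eˣ + e⁻ˣ)` turns the two moment generating function
bounds into the fourth-moment bound `E⟪u, X⟫⁴ ≤ 24 (M₁ + M₂) / s⁴` for every unit vector `u`.
Writing `w = u / √(Cd)`, Cauchy–Schwarz on the event `{‖X‖² > Cd}` gives
`E[⟪w, X⟫² 1{‖X‖² > Cd}] ≤ (Cd)⁻¹ √(E⟪u, X⟫⁴) √P(‖X‖² > Cd)`, and the concentration
hypothesis bounds the probability by `exp(-c₀d)`. When `C`, `s`, `M₁`, `M₂` are bounded, the
prefactor is bounded uniformly in `d ≥ 1`, so it is absorbed into `exp(-c₀d/4)`. -/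

open MeasureTheory
open scoped InnerProductSpace

lemma pow_four_le_exp_add_exp (x : ℝ) : x ^ 4 ≤ 24 * (Real.exp x + Real.exp (-x)) := by
  have h := Real.pow_div_factorial_le_exp _ (abs_nonneg x) 4
  rw [pow_abs, abs_of_nonneg (by positivity)] at h
  have : Real.exp |x| ≤ Real.exp x + Real.exp (-x) := by
    rcases abs_cases x with ⟨hx, -⟩ | ⟨hx, -⟩ <;> rw [hx] <;>
      linarith [Real.exp_pos x, Real.exp_pos (-x)]
  norm_num [Nat.factorial] at h
  linarith

lemma exists_nat_mul_exp_neg_le (R : ℝ) {c : ℝ} (hc : 0 < c) :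
    ∃ d₀ : ℕ, ∀ d : ℕ, d₀ ≤ d → R * Real.exp (-(c * d / 2)) ≤ Real.exp (-(c / 4 * d)) := by
  have : ∀ᶠ d : ℕ in Filter.atTop, R ≤ Real.exp (c / 4 * d) :=
    (Real.tendsto_exp_atTop.comp
      (tendsto_natCast_atTop_atTop.const_mul_atTop (by positivity))).eventually_ge_atTop R
  obtain ⟨d₀, hd₀⟩ := Filter.eventually_atTop.1 this
  refine ⟨d₀, fun d hd => ?_⟩
  calc R * Real.exp (-(c * d / 2)) ≤ Real.exp (c / 4 * d) * Real.exp (-(c * d / 2)) := by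
        gcongr; exact hd₀ d hd
    _ = Real.exp (-(c / 4 * d)) := by rw [← Real.exp_add]; ring_nf

lemma one_div_mul_sqrt_le_of_bounded {K C s M₁ M₂ d : ℝ} (hK : 0 < K) (hC : K⁻¹ ≤ C)
    (hs : K⁻¹ ≤ s) (hM₁ : M₁ ≤ K) (hM₂ : M₂ ≤ K) (hd : 1 ≤ d) :
    1 / (C * d) * √(2048 * (M₁ + M₂) / s ^ 4) ≤ K * √(4096 * K ^ 5) := by
  have hC₀ : 0 < C := (inv_pos.2 hK).trans_le hC
  have hs₀ : 0 < s := (inv_pos.2 hK).trans_le hs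
  have hCd : 1 / (C * d) ≤ K := by
    rw [div_le_iff₀ (by positivity), ← inv_mul_le_iff₀ hK, mul_one]
    nlinarith
  have hs4 : 1 / s ^ 4 ≤ K ^ 4 := by
    rw [one_div, ← inv_pow]; gcongr; exact inv_le_of_inv_le₀ hK hs
  gcongr
  calc 2048 * (M₁ + M₂) / s ^ 4 ≤ 4096 * K * (1 / s ^ 4) := by
        rw [← mul_one_div]; exact mul_le_mul_of_nonneg_right (by linarith) (by positivity)
    _ ≤ 4096 * K * K ^ 4 := by gcongr
    _ = 4096 * K ^ 5 := by ring

variable {Ω : Type*} [MeasurableSpace Ω] {μ : Measure Ω}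

lemma memLp_two_sq_of_integrable_pow_four {Y : Ω → ℝ} (hY : AEStronglyMeasurable Y μ)
    (hY4 : Integrable (fun ω => Y ω ^ 4) μ) : MemLp (fun ω => Y ω ^ 2) 2 μ :=
  (memLp_two_iff_integrable_sq (hY.pow 2)).2 (by simpa only [Pi.pow_apply, ← pow_mul] using hY4)

lemma setIntegral_sq_le_sqrt_mul_sqrt [IsFiniteMeasure μ] {Y : Ω → ℝ}
    (hY : AEStronglyMeasurable Y μ) (hY4 : Integrable (fun ω => Y ω ^ 4) μ) (A : Set Ω) :
    ∫ ω in A, Y ω ^ 2 ∂μ ≤ √(∫ ω, Y ω ^ 4 ∂μ) * √(μ.real A) := by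
  have holder := integral_mul_le_Lp_mul_Lq_of_nonneg (μ := μ.restrict A)
    Real.HolderConjugate.two_two (f := fun ω => Y ω ^ 2) (g := fun _ => (1 : ℝ))
    (ae_of_all _ fun ω => sq_nonneg (Y ω)) (ae_of_all _ fun _ => zero_le_one)
    (by simpa using (memLp_two_sq_of_integrable_pow_four hY hY4).restrict A)
    (by simpa using memLp_const 1)
  simp only [mul_one, setIntegral_const, smul_eq_mul, Real.rpow_two, one_pow, ← pow_mul,
    Nat.reduceMul, ← Real.sqrt_eq_rpow] at holder
  have h4 : ∫ ω in A, Y ω ^ 4 ∂μ ≤ ∫ ω, Y ω ^ 4 ∂μ :=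
    setIntegral_le_integral hY4 (ae_of_all _ fun ω => by positivity)
  exact holder.trans (by gcongr)

lemma integrable_pow_four_and_integral_le_of_exp {Y : Ω → ℝ} (hY : AEStronglyMeasurable Y μ)
    {s : ℝ} (hs : 0 < s) (hexp : Integrable (fun ω => Real.exp (s * Y ω)) μ)
    (hexp_neg : Integrable (fun ω => Real.exp (-(s * Y ω))) μ) :
    Integrable (fun ω => Y ω ^ 4) μ ∧
      ∫ ω, Y ω ^ 4 ∂μ
        ≤ 24 / s ^ 4 * (∫ ω, Real.exp (s * Y ω) ∂μ + ∫ ω, Real.exp (-(s * Y ω)) ∂μ) := by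
  have hle : ∀ ω, Y ω ^ 4 ≤ 24 / s ^ 4 * (Real.exp (s * Y ω) + Real.exp (-(s * Y ω))) :=
    fun ω => by
      rw [div_mul_eq_mul_div, le_div_iff₀ (by positivity), mul_comm, ← mul_pow]
      exact pow_four_le_exp_add_exp _
  have hdom :
      Integrable (fun ω => 24 / s ^ 4 * (Real.exp (s * Y ω) + Real.exp (-(s * Y ω)))) μ :=
    (hexp.add hexp_neg).const_mul _
  have hint : Integrable (fun ω => Y ω ^ 4) μ :=
    hdom.mono' (hY.pow 4) (ae_of_all _ fun ω => by
      rw [Real.norm_of_nonneg (by positivity)]; exact hle ω)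
  refine ⟨hint, (integral_mono hint hdom hle).trans_eq ?_⟩
  rw [integral_const_mul, integral_add hexp hexp_neg]

section InnerProductSpace

variable {E : Type*} [NormedAddCommGroup E] [InnerProductSpace ℝ E] [MeasurableSpace E]
  [OpensMeasurableSpace E] {X : Ω → E}

theorem truncated_inner_sq_integral_le [IsFiniteMeasure μ] (hX : Measurable X) {T B : ℝ}
    (hT : 0 ≤ T)
    (h4 : ∀ u : E, ‖u‖ = 1 →
      Integrable (fun ω => ⟪u, X ω⟫_ℝ ^ 4) μ ∧ ∫ ω, ⟪u, X ω⟫_ℝ ^ 4 ∂μ ≤ B)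
    {w : E} (hw : ‖w‖ = 1 / √T) :
    Integrable (fun ω => if T < ‖X ω‖ ^ 2 then |⟪w, X ω⟫_ℝ| ^ 2 else 0) μ ∧
      ∫ ω, (if T < ‖X ω‖ ^ 2 then |⟪w, X ω⟫_ℝ| ^ 2 else 0) ∂μ
        ≤ T⁻¹ * √B * √(μ.real {ω | T < ‖X ω‖ ^ 2}) := by
  rcases hT.eq_or_lt with rfl | hT
  · -- `1 / √0 = 0`, so `w = 0`
    obtain rfl : w = 0 := by simpa using hw
    simp
  set u := √T • w
  have hu : ‖u‖ = 1 := by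
    rw [norm_smul, hw, Real.norm_of_nonneg (Real.sqrt_nonneg T), mul_one_div_cancel]
    exact (Real.sqrt_pos.2 hT).ne'
  obtain ⟨hu4, huB⟩ := h4 u hu
  have hY : Measurable fun ω => ⟪u, X ω⟫_ℝ := by fun_prop
  set A := {ω | T < ‖X ω‖ ^ 2}
  have hA : MeasurableSet A := measurableSet_lt measurable_const (by fun_prop)
  have hrescale : (fun ω => if T < ‖X ω‖ ^ 2 then |⟪w, X ω⟫_ℝ| ^ 2 else 0)
      = fun ω => T⁻¹ * A.indicator (fun ω => ⟪u, X ω⟫_ℝ ^ 2) ω := by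
    ext ω
    by_cases hω : T < ‖X ω‖ ^ 2
    · simp [A, hω, u, real_inner_smul_left, mul_pow, Real.sq_sqrt hT.le, hT.ne']
    · simp [A, hω]
  rw [hrescale]
  have hu2 : Integrable (fun ω => ⟪u, X ω⟫_ℝ ^ 2) μ :=
    (memLp_two_sq_of_integrable_pow_four hY.aestronglyMeasurable hu4).integrable one_le_two
  refine ⟨(hu2.indicator hA).const_mul _, ?_⟩
  rw [integral_const_mul, integral_indicator hA, mul_assoc]
  gcongr
  calc ∫ ω in A, ⟪u, X ω⟫_ℝ ^ 2 ∂μ ≤ √(∫ ω, ⟪u, X ω⟫_ℝ ^ 4 ∂μ) * √(μ.real A) :=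
        setIntegral_sq_le_sqrt_mul_sqrt hY.aestronglyMeasurable hu4 A
    _ ≤ √B * √(μ.real A) := by gcongr

theorem truncated_inner_sq_integral_le_of_concentration [IsProbabilityMeasure μ]
    (hX : Measurable X) {C c₀ s M₁ M₂ d : ℝ} (hC : 0 < C) (hs : 0 < s) (hd : 0 ≤ d)
    (hconc : 1 - Real.exp (-(c₀ * d)) ≤ μ.real {ω | ‖X ω‖ ^ 2 ≤ C * d})
    (h₁ : ∀ u : E, ‖u‖ = 1 →
      Integrable (fun ω => Real.exp (s * ⟪u, X ω⟫_ℝ)) μ ∧ ∫ ω, Real.exp (s * ⟪u, X ω⟫_ℝ) ∂μ ≤ M₁)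
    (h₂ : ∀ u : E, ‖u‖ = 1 →
      Integrable (fun ω => Real.exp (-(s * ⟪u, X ω⟫_ℝ))) μ ∧
        ∫ ω, Real.exp (-(s * ⟪u, X ω⟫_ℝ)) ∂μ ≤ M₂)
    {w : E} (hw : ‖w‖ = 1 / √(C * d)) :
    Integrable (fun ω => if C * d < ‖X ω‖ ^ 2 then |⟪w, X ω⟫_ℝ| ^ 2 else 0) μ ∧
      ∫ ω, (if C * d < ‖X ω‖ ^ 2 then |⟪w, X ω⟫_ℝ| ^ 2 else 0) ∂μ
        ≤ 1 / (C * d) * √(2048 * (M₁ + M₂) / s ^ 4) * Real.exp (-(c₀ * d / 2)) := by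
  have htail : μ.real {ω | C * d < ‖X ω‖ ^ 2} ≤ Real.exp (-(c₀ * d)) := by
    have hcompl : {ω | C * d < ‖X ω‖ ^ 2} = {ω | ‖X ω‖ ^ 2 ≤ C * d}ᶜ := by
      ext ω; simp
    rw [hcompl, probReal_compl_eq_one_sub (measurableSet_le (by fun_prop) measurable_const)]
    linarith [hconc]
  have h4 : ∀ u : E, ‖u‖ = 1 → Integrable (fun ω => ⟪u, X ω⟫_ℝ ^ 4) μ ∧
      ∫ ω, ⟪u, X ω⟫_ℝ ^ 4 ∂μ ≤ 2048 * (M₁ + M₂) / s ^ 4 := fun u hu => by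
    obtain ⟨hi₁, hM₁⟩ := h₁ u hu
    obtain ⟨hi₂, hM₂⟩ := h₂ u hu
    have hY : Measurable fun ω => ⟪u, X ω⟫_ℝ := by fun_prop
    obtain ⟨hint, hle⟩ :=
      integrable_pow_four_and_integral_le_of_exp hY.aestronglyMeasurable hs hi₁ hi₂
    refine ⟨hint, hle.trans ?_⟩
    have := integral_exp_pos hi₁
    have := integral_exp_pos hi₂
    rw [div_mul_eq_mul_div]
    gcongr
    linarith
  obtain ⟨hint, hle⟩ := truncated_inner_sq_integral_le hX (by positivity) h4 hw
  refine ⟨hint, hle.trans ?_⟩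
  rw [one_div, ← neg_div, Real.exp_half]
  gcongr

end InnerProductSpace

/-- under the norm-concentration assumption on `X` and uniform MGF bounds,
the truncated second moment
`λ(d) = sup_{‖w‖ = 1/√(Cd)} E[|wᵀX|² 1{‖X‖² > Cd}]` satisfies
`λ(d) ≤ (1/(Cd))·√(2048(M₁+M₂)/s⁴)·exp(−c₀d/2)`; in particular, if `C, s, M₁, M₂`
are bounded (above and, for `C` and `s`, below) independently of `d`, then
`λ(d) ≤ exp(−c'·d)` for some `c' > 0` and all sufficiently large `d`. -/
theorem truncated_second_moment_bound :
    (∀ (d : ℕ) (Ω : Type) (_ : MeasurableSpace Ω) (μ : Measure Ω), IsProbabilityMeasure μ →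
      ∀ (X : Ω → EuclideanSpace ℝ (Fin d)), Measurable X →
      ∀ (C c₀ s M₁ M₂ : ℝ), 0 < C → 0 < c₀ → 0 < s →
      1 - Real.exp (-(c₀ * d)) ≤ (μ {ω | ‖X ω‖ ^ 2 ≤ C * d}).toReal →
      (∀ w : EuclideanSpace ℝ (Fin d), ‖w‖ = 1 →
        Integrable (fun ω => Real.exp (s * ⟪w, X ω⟫_ℝ)) μ ∧
          ∫ ω, Real.exp (s * ⟪w, X ω⟫_ℝ) ∂μ ≤ M₁) →
      (∀ w : EuclideanSpace ℝ (Fin d), ‖w‖ = 1 →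
        Integrable (fun ω => Real.exp (-(s * ⟪w, X ω⟫_ℝ))) μ ∧
          ∫ ω, Real.exp (-(s * ⟪w, X ω⟫_ℝ)) ∂μ ≤ M₂) →
      ∀ w : EuclideanSpace ℝ (Fin d), ‖w‖ = 1 / Real.sqrt (C * d) →
        Integrable (fun ω => if C * d < ‖X ω‖ ^ 2 then |⟪w, X ω⟫_ℝ| ^ 2 else 0) μ ∧
          ∫ ω, (if C * d < ‖X ω‖ ^ 2 then |⟪w, X ω⟫_ℝ| ^ 2 else 0) ∂μ
            ≤ 1 / (C * d) * Real.sqrt (2048 * (M₁ + M₂) / s ^ 4) * Real.exp (-(c₀ * d / 2)))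
    ∧
    (∀ K c₀ : ℝ, 0 < K → 0 < c₀ → ∃ c' > 0, ∃ d₀ : ℕ, ∀ d : ℕ, d₀ ≤ d →
      ∀ (Ω : Type) (_ : MeasurableSpace Ω) (μ : Measure Ω), IsProbabilityMeasure μ →
      ∀ (X : Ω → EuclideanSpace ℝ (Fin d)), Measurable X →
      ∀ (C s M₁ M₂ : ℝ), K⁻¹ ≤ C → C ≤ K → K⁻¹ ≤ s → s ≤ K → M₁ ≤ K → M₂ ≤ K →
      1 - Real.exp (-(c₀ * d)) ≤ (μ {ω | ‖X ω‖ ^ 2 ≤ C * d}).toReal →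
      (∀ w : EuclideanSpace ℝ (Fin d), ‖w‖ = 1 →
        Integrable (fun ω => Real.exp (s * ⟪w, X ω⟫_ℝ)) μ ∧
          ∫ ω, Real.exp (s * ⟪w, X ω⟫_ℝ) ∂μ ≤ M₁) →
      (∀ w : EuclideanSpace ℝ (Fin d), ‖w‖ = 1 →
        Integrable (fun ω => Real.exp (-(s * ⟪w, X ω⟫_ℝ))) μ ∧
          ∫ ω, Real.exp (-(s * ⟪w, X ω⟫_ℝ)) ∂μ ≤ M₂) →
      ∀ w : EuclideanSpace ℝ (Fin d), ‖w‖ = 1 / Real.sqrt (C * d) →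
        ∫ ω, (if C * d < ‖X ω‖ ^ 2 then |⟪w, X ω⟫_ℝ| ^ 2 else 0) ∂μ
          ≤ Real.exp (-(c' * d))) := by
  refine ⟨fun d Ω _ μ _ X hX C c₀ s M₁ M₂ hC _ hs hconc h₁ h₂ w hw =>
    truncated_inner_sq_integral_le_of_concentration hX hC hs d.cast_nonneg hconc h₁ h₂ hw,
    fun K c₀ hK hc₀ => ?_⟩
  obtain ⟨d₀, hd₀⟩ := exists_nat_mul_exp_neg_le (K * √(4096 * K ^ 5)) hc₀
  refine ⟨c₀ / 4, by positivity, max d₀ 1, fun d hd Ω _ μ _ X hX C s M₁ M₂ hC _ hs _ hM₁ hM₂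
    hconc h₁ h₂ w hw => ?_⟩
  have hK_inv : 0 < K⁻¹ := inv_pos.2 hK
  calc ∫ ω, (if C * d < ‖X ω‖ ^ 2 then |⟪w, X ω⟫_ℝ| ^ 2 else 0) ∂μ
      ≤ 1 / (C * d) * √(2048 * (M₁ + M₂) / s ^ 4) * Real.exp (-(c₀ * d / 2)) :=
        (truncated_inner_sq_integral_le_of_concentration hX (hK_inv.trans_le hC) (hK_inv.trans_le hs)
          d.cast_nonneg hconc h₁ h₂ hw).2
    _ ≤ K * √(4096 * K ^ 5) * Real.exp (-(c₀ * d / 2)) := by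
        gcongr ?_ * _
        exact one_div_mul_sqrt_le_of_bounded hK hC hs hM₁ hM₂
          (Nat.one_le_cast.2 (le_of_max_le_right hd))
    _ ≤ Real.exp (-(c₀ / 4 * d)) := hd₀ d (le_of_max_le_left hd)
end

section
/- Let (X, Y) be a random pair in ℝ^d × ℝ with |Y| ≤ M almost surely, let C > 0, and set p := P(‖X‖₂² > C·d) and λ := sup_{w ∈ ℝ^d, ‖w‖₂ = 1/√(Cd)} E[ |w^T X|² · 1{‖X‖₂² > C·d} ]. Let m ∈ ℕ and (a, W) ∈ ℝ_{≥0}^m × ℝ^{m×d} with ‖w_j‖₂ = 1/√(Cd) for all 1 ≤ j ≤ m. Then | E[(Y − ∑_{j=1}^m a_j ReLU(w_j^T X))²] − E[(Y − ∑_{j=1}^m a_j S-ReLU(w_j^T X))²] | ≤ 2M·‖a‖₁·(√(λp) + p) + ‖a‖₁²·(λ + p). -/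
open MeasureTheory Finset
open scoped InnerProductSpace

/-!
Off the event `E = {‖X‖² > Cd}` every pre-activation `⟪w_j, X⟫` lies in `[-1, 1]`
(Cauchy–Schwarz with `‖w_j‖ = 1/√(Cd)`), so the ReLU network `F` and the S-ReLU network `S`
agree there, while `0 ≤ S ≤ F` everywhere. Since `(Y - F)² - (Y - S)² = (F² - S²) - 2Y(F - S)`,
the risk gap is at most `E[F² - S²] + 2M E[F - S]`, and both integrands vanish off `E`.
On `E`, Cauchy–Schwarz for the weights `a_j` gives `F² ≤ ‖a‖₁ ∑ a_j |w_jᵀX|²`, whence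
`E[F² - S²] ≤ ‖a‖₁² λ`; and `F - S ≤ ∑ a_j |w_jᵀX|`, where Cauchy–Schwarz for integrals gives
`E[|w_jᵀX| 1_E] ≤ √(λp)`.
-/

/-- The saturated ReLU activation. -/
noncomputable def SReLU (x : ℝ) : ℝ := if x < 0 then 0 else if x < 1 then x else 1

lemma SReLU_eq_min_max (x : ℝ) : SReLU x = min (max x 0) 1 := by
  unfold SReLU; split_ifs <;> grind

lemma SReLU_nonneg (x : ℝ) : 0 ≤ SReLU x := by
  rw [SReLU_eq_min_max]; positivity

lemma SReLU_le_max (x : ℝ) : SReLU x ≤ max x 0 := by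
  rw [SReLU_eq_min_max]; exact min_le_left _ _

lemma SReLU_eq_max_of_le_one {x : ℝ} (hx : x ≤ 1) : SReLU x = max x 0 := by
  rw [SReLU_eq_min_max]; exact min_eq_left (max_le hx zero_le_one)

lemma lipschitzWith_SReLU : LipschitzWith 1 SReLU := by
  rw [funext SReLU_eq_min_max]; exact (LipschitzWith.id.max_const 0).min_const 1

lemma max_zero_le_abs (x : ℝ) : max x 0 ≤ |x| := max_le (le_abs_self x) (abs_nonneg x)

lemma abs_inner_le_one_of_norm_eq_one_div_sqrt {F : Type*} [NormedAddCommGroup F]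
    [InnerProductSpace ℝ F] {w x : F} {r : ℝ} (hw : ‖w‖ = 1 / √r) (hx : ‖x‖ ^ 2 ≤ r) :
    |⟪w, x⟫_ℝ| ≤ 1 :=
  calc |⟪w, x⟫_ℝ| ≤ ‖w‖ * ‖x‖ := abs_real_inner_le_norm w x
    _ ≤ 1 / √r * √r := by rw [hw]; gcongr; exact Real.le_sqrt_of_sq_le hx
    _ ≤ 1 := by
      rcases (Real.sqrt_nonneg r).eq_or_lt with h | h
      · simp [← h]
      · rw [one_div_mul_cancel h.ne']

lemma abs_sub_sq_sub_sub_sq_le {y f g M : ℝ} (hy : |y| ≤ M) (hg : 0 ≤ g) (hgf : g ≤ f) :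
    |(y - f) ^ 2 - (y - g) ^ 2| ≤ (f ^ 2 - g ^ 2) + 2 * M * (f - g) := by
  obtain ⟨hy₁, hy₂⟩ := abs_le.1 hy
  rw [abs_le]; constructor <;> nlinarith

section Network

variable {ι : Type*} [Fintype ι] {a : ι → ℝ}

lemma sum_mul_SReLU_eq_of_le_one {x : ι → ℝ} (hx : ∀ j, x j ≤ 1) :
    ∑ j, a j * SReLU (x j) = ∑ j, a j * max (x j) 0 := by
  simp only [SReLU_eq_max_of_le_one (hx _)]

lemma sum_mul_SReLU_nonneg (ha : ∀ j, 0 ≤ a j) (x : ι → ℝ) : 0 ≤ ∑ j, a j * SReLU (x j) :=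
  sum_nonneg fun j _ => mul_nonneg (ha j) (SReLU_nonneg _)

lemma sum_mul_SReLU_le_sum_mul_max (ha : ∀ j, 0 ≤ a j) (x : ι → ℝ) :
    ∑ j, a j * SReLU (x j) ≤ ∑ j, a j * max (x j) 0 :=
  sum_le_sum fun j _ => mul_le_mul_of_nonneg_left (SReLU_le_max _) (ha j)

lemma sum_mul_max_sub_sum_mul_SReLU_le (ha : ∀ j, 0 ≤ a j) (x : ι → ℝ) :
    ∑ j, a j * max (x j) 0 - ∑ j, a j * SReLU (x j) ≤ ∑ j, a j * |x j| := by
  rw [← sum_sub_distrib]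
  refine sum_le_sum fun j _ => ?_
  rw [← mul_sub]
  refine mul_le_mul_of_nonneg_left ?_ (ha j)
  linarith [max_zero_le_abs (x j), SReLU_nonneg (x j)]

lemma sq_sum_mul_max_le (ha : ∀ j, 0 ≤ a j) (x : ι → ℝ) :
    (∑ j, a j * max (x j) 0) ^ 2 ≤ (∑ j, a j) * ∑ j, a j * x j ^ 2 := by
  refine sum_sq_le_sum_mul_sum_of_sq_le_mul _ (fun j _ => ha j)
    (fun j _ => mul_nonneg (ha j) (sq_nonneg _)) fun j _ => ?_
  have : max (x j) 0 ^ 2 ≤ x j ^ 2 := by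
    rw [← sq_abs (x j)]; exact pow_le_pow_left₀ (le_max_right _ _) (max_zero_le_abs _) 2
  calc (a j * max (x j) 0) ^ 2 = a j * (a j * max (x j) 0 ^ 2) := by ring
    _ ≤ a j * (a j * x j ^ 2) := by have := ha j; gcongr

end Network

section Integrals

variable {Ω : Type*} [MeasurableSpace Ω] {μ : Measure Ω}

lemma integral_abs_le_sqrt_integral_sq_mul [IsFiniteMeasure μ] {u : Ω → ℝ} (hu : MemLp u 2 μ) :
    ∫ ω, |u ω| ∂μ ≤ √((∫ ω, u ω ^ 2 ∂μ) * μ.real Set.univ) := by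
  have h := integral_mul_le_Lp_mul_Lq_of_nonneg (μ := μ) Real.HolderConjugate.two_two
    (f := fun _ => (1 : ℝ)) (g := fun ω => |u ω|) (ae_of_all _ fun _ => zero_le_one)
    (ae_of_all _ fun _ => abs_nonneg _) (memLp_const 1)
    (by rw [ENNReal.ofReal_ofNat]; exact hu.abs)
  simp only [one_mul, Real.rpow_two, one_pow, mul_one, sq_abs, integral_const, smul_eq_mul] at h
  rwa [Real.sqrt_mul (integral_nonneg fun _ => sq_nonneg _), mul_comm, Real.sqrt_eq_rpow,
    Real.sqrt_eq_rpow]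

lemma memLp_two_of_integrable_indicator_sq [IsFiniteMeasure μ] {u : Ω → ℝ} {E : Set Ω}
    (hu : AEStronglyMeasurable u μ) (hoff : ∀ ω ∉ E, |u ω| ≤ 1)
    (hE : Integrable (E.indicator fun ω => u ω ^ 2) μ) : MemLp u 2 μ := by
  refine (memLp_two_iff_integrable_sq hu).2 <|
    ((integrable_const 1).add hE).mono' (hu.pow 2) (ae_of_all _ fun ω => ?_)
  rw [Real.norm_eq_abs, abs_pow, sq_abs, Pi.add_apply]
  by_cases hω : ω ∈ E
  · rw [Set.indicator_of_mem hω]; linarith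
  · rw [Set.indicator_of_notMem hω, add_zero, ← sq_abs]
    exact pow_le_one₀ (abs_nonneg _) (hoff ω hω)

lemma abs_integral_sub_sq_sub_integral_sub_sq_le [IsFiniteMeasure μ] {Y F S : Ω → ℝ} {M : ℝ}
    (hY : MemLp Y 2 μ) (hF : MemLp F 2 μ) (hS : MemLp S 2 μ) (hYM : ∀ᵐ ω ∂μ, |Y ω| ≤ M)
    (hS₀ : ∀ ω, 0 ≤ S ω) (hSF : ∀ ω, S ω ≤ F ω) :
    |(∫ ω, (Y ω - F ω) ^ 2 ∂μ) - ∫ ω, (Y ω - S ω) ^ 2 ∂μ|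
      ≤ (∫ ω, (F ω ^ 2 - S ω ^ 2) ∂μ) + 2 * M * ∫ ω, (F ω - S ω) ∂μ := by
  have hYF : Integrable (fun ω => (Y ω - F ω) ^ 2) μ := (hY.sub hF).integrable_sq
  have hYS : Integrable (fun ω => (Y ω - S ω) ^ 2) μ := (hY.sub hS).integrable_sq
  have hF₂S₂ : Integrable (fun ω => F ω ^ 2 - S ω ^ 2) μ := hF.integrable_sq.sub hS.integrable_sq
  have hFS : Integrable (fun ω => 2 * M * (F ω - S ω)) μ :=
    ((hF.integrable one_le_two).sub (hS.integrable one_le_two)).const_mul _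
  rw [← integral_sub hYF hYS, ← integral_const_mul, ← integral_add hF₂S₂ hFS]
  refine abs_integral_le_integral_abs.trans (integral_mono_ae (hYF.sub hYS).abs (hF₂S₂.add hFS) ?_)
  filter_upwards [hYM] with ω hω using abs_sub_sq_sub_sub_sq_le hω (hS₀ ω) (hSF ω)

end Integrals

section TwoLayerNetwork

variable {Ω ι : Type*} [MeasurableSpace Ω] {μ : Measure Ω} [Fintype ι] {a : ι → ℝ}
  {u : ι → Ω → ℝ} {E : Set Ω}

lemma memLp_sum_mul_max {p : ENNReal} (hu : ∀ j, MemLp (u j) p μ) :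
    MemLp (fun ω => ∑ j, a j * max (u j ω) 0) p μ :=
  memLp_finsetSum _ fun j _ =>
    ((LipschitzWith.id.max_const 0).comp_memLp (max_self 0) (hu j)).const_mul (a j)

lemma memLp_sum_mul_SReLU {p : ENNReal} (hu : ∀ j, MemLp (u j) p μ) :
    MemLp (fun ω => ∑ j, a j * SReLU (u j ω)) p μ :=
  memLp_finsetSum _ fun j _ =>
    (lipschitzWith_SReLU.comp_memLp (by simp [SReLU]) (hu j)).const_mul (a j)

lemma integral_sum_mul_max_sub_sum_mul_SReLU_le [IsFiniteMeasure μ] (ha : ∀ j, 0 ≤ a j)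
    (hu : ∀ j, MemLp (u j) 2 μ) (hle : ∀ j, ∀ ω ∉ E, u j ω ≤ 1) {lam : ℝ}
    (hlam : ∀ j, ∫ ω in E, u j ω ^ 2 ∂μ ≤ lam) :
    ∫ ω, (∑ j, a j * max (u j ω) 0 - ∑ j, a j * SReLU (u j ω)) ∂μ
      ≤ (∑ j, a j) * √(lam * μ.real E) := by
  have hFS := ((memLp_sum_mul_max (a := a) hu).integrable one_le_two).sub
    ((memLp_sum_mul_SReLU (a := a) hu).integrable one_le_two)
  have habs : ∀ j, Integrable (fun ω => a j * |u j ω|) μ := fun j =>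
    ((hu j).integrable one_le_two).abs.const_mul _
  calc ∫ ω, (∑ j, a j * max (u j ω) 0 - ∑ j, a j * SReLU (u j ω)) ∂μ
      = ∫ ω in E, (∑ j, a j * max (u j ω) 0 - ∑ j, a j * SReLU (u j ω)) ∂μ :=
        (setIntegral_eq_integral_of_forall_compl_eq_zero fun ω hω => by
          rw [sum_mul_SReLU_eq_of_le_one fun j => hle j ω hω, sub_self]).symm
    _ ≤ ∫ ω in E, ∑ j, a j * |u j ω| ∂μ :=
        setIntegral_mono hFS.integrableOn (integrable_finsetSum _ fun j _ => habs j).integrableOn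
          fun ω => sum_mul_max_sub_sum_mul_SReLU_le ha _
    _ = ∑ j, a j * ∫ ω in E, |u j ω| ∂μ := by
        rw [integral_finsetSum _ fun j _ => (habs j).integrableOn]
        simp only [integral_const_mul]
    _ ≤ ∑ j, a j * √(lam * μ.real E) := by
        gcongr with j
        · exact ha j
        calc ∫ ω in E, |u j ω| ∂μ ≤ √((∫ ω in E, u j ω ^ 2 ∂μ) * (μ.restrict E).real Set.univ) :=
              integral_abs_le_sqrt_integral_sq_mul ((hu j).restrict E)
          _ ≤ √(lam * μ.real E) := by
              rw [measureReal_restrict_apply_univ]; gcongr; exact hlam j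
    _ = (∑ j, a j) * √(lam * μ.real E) := (sum_mul ..).symm

lemma integral_sq_sum_mul_max_sub_sq_sum_mul_SReLU_le [IsFiniteMeasure μ] (ha : ∀ j, 0 ≤ a j)
    (hu : ∀ j, MemLp (u j) 2 μ) (hle : ∀ j, ∀ ω ∉ E, u j ω ≤ 1) {lam : ℝ}
    (hlam : ∀ j, ∫ ω in E, u j ω ^ 2 ∂μ ≤ lam) :
    ∫ ω, ((∑ j, a j * max (u j ω) 0) ^ 2 - (∑ j, a j * SReLU (u j ω)) ^ 2) ∂μ
      ≤ (∑ j, a j) ^ 2 * lam := by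
  have hF₂S₂ := (memLp_sum_mul_max (a := a) hu).integrable_sq.sub
    (memLp_sum_mul_SReLU (a := a) hu).integrable_sq
  have hsq : ∀ j, Integrable (fun ω => a j * u j ω ^ 2) μ := fun j =>
    (hu j).integrable_sq.const_mul _
  have hA : 0 ≤ ∑ j, a j := sum_nonneg fun j _ => ha j
  calc ∫ ω, ((∑ j, a j * max (u j ω) 0) ^ 2 - (∑ j, a j * SReLU (u j ω)) ^ 2) ∂μ
      = ∫ ω in E, ((∑ j, a j * max (u j ω) 0) ^ 2 - (∑ j, a j * SReLU (u j ω)) ^ 2) ∂μ :=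
        (setIntegral_eq_integral_of_forall_compl_eq_zero fun ω hω => by
          rw [sum_mul_SReLU_eq_of_le_one fun j => hle j ω hω, sub_self]).symm
    _ ≤ ∫ ω in E, (∑ j, a j) * ∑ j, a j * u j ω ^ 2 ∂μ :=
        setIntegral_mono hF₂S₂.integrableOn
          ((integrable_finsetSum _ fun j _ => hsq j).const_mul _).integrableOn
          fun ω => (sub_le_self _ (sq_nonneg _)).trans (sq_sum_mul_max_le ha _)
    _ = (∑ j, a j) * ∑ j, a j * ∫ ω in E, u j ω ^ 2 ∂μ := by
        rw [integral_const_mul, integral_finsetSum _ fun j _ => (hsq j).integrableOn]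
        simp only [integral_const_mul]
    _ ≤ (∑ j, a j) * ∑ j, a j * lam := by
        gcongr with j
        · exact ha j
        · exact hlam j
    _ = (∑ j, a j) ^ 2 * lam := by rw [← sum_mul]; ring

theorem abs_integral_relu_risk_sub_integral_SReLU_risk_le [IsFiniteMeasure μ] {Y : Ω → ℝ}
    {M : ℝ} (hY : AEStronglyMeasurable Y μ) (hYM : ∀ᵐ ω ∂μ, |Y ω| ≤ M) (hM : 0 ≤ M)
    (ha : ∀ j, 0 ≤ a j) (hu : ∀ j, MemLp (u j) 2 μ) (hle : ∀ j, ∀ ω ∉ E, u j ω ≤ 1) {lam : ℝ}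
    (hlam : ∀ j, ∫ ω in E, u j ω ^ 2 ∂μ ≤ lam) :
    |(∫ ω, (Y ω - ∑ j, a j * max (u j ω) 0) ^ 2 ∂μ)
        - ∫ ω, (Y ω - ∑ j, a j * SReLU (u j ω)) ^ 2 ∂μ|
      ≤ 2 * M * (∑ j, a j) * √(lam * μ.real E) + (∑ j, a j) ^ 2 * lam := by
  have hYL2 : MemLp Y 2 μ := MemLp.of_bound hY M (by simpa only [Real.norm_eq_abs] using hYM)
  calc _ ≤ (∫ ω, ((∑ j, a j * max (u j ω) 0) ^ 2 - (∑ j, a j * SReLU (u j ω)) ^ 2) ∂μ)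
          + 2 * M * ∫ ω, (∑ j, a j * max (u j ω) 0 - ∑ j, a j * SReLU (u j ω)) ∂μ :=
        abs_integral_sub_sq_sub_integral_sub_sq_le hYL2 (memLp_sum_mul_max hu)
          (memLp_sum_mul_SReLU hu) hYM (fun _ => sum_mul_SReLU_nonneg ha _)
          (fun _ => sum_mul_SReLU_le_sum_mul_max ha _)
    _ ≤ (∑ j, a j) ^ 2 * lam + 2 * M * ((∑ j, a j) * √(lam * μ.real E)) := by
        gcongr
        · exact integral_sq_sum_mul_max_sub_sq_sum_mul_SReLU_le ha hu hle hlam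
        · exact integral_sum_mul_max_sub_sum_mul_SReLU_le ha hu hle hlam
    _ = 2 * M * (∑ j, a j) * √(lam * μ.real E) + (∑ j, a j) ^ 2 * lam := by ring

end TwoLayerNetwork

theorem relu_srelu_population_risk_gap_general {d : ℕ} {Ω : Type} [MeasurableSpace Ω]
    (μ : Measure Ω) [IsProbabilityMeasure μ]
    (X : Ω → EuclideanSpace ℝ (Fin d)) (Y : Ω → ℝ)
    (hX : Measurable X) (hY : Measurable Y)
    (M C : ℝ)
    (hYbd : ∀ᵐ ω ∂μ, |Y ω| ≤ M)
    (p lam : ℝ)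
    (hp : p = (μ {ω | C * d < ‖X ω‖ ^ 2}).toReal)
    (hlam : ∀ w : EuclideanSpace ℝ (Fin d), ‖w‖ = 1 / Real.sqrt (C * d) →
      Integrable (fun ω => if C * d < ‖X ω‖ ^ 2 then |⟪w, X ω⟫_ℝ| ^ 2 else 0) μ ∧
        ∫ ω, (if C * d < ‖X ω‖ ^ 2 then |⟪w, X ω⟫_ℝ| ^ 2 else 0) ∂μ ≤ lam)
    (m : ℕ) (a : Fin m → ℝ) (W : Fin m → EuclideanSpace ℝ (Fin d))
    (ha : ∀ j, 0 ≤ a j) (hW : ∀ j, ‖W j‖ = 1 / Real.sqrt (C * d)) :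
    |(∫ ω, (Y ω - ∑ j, a j * max ⟪W j, X ω⟫_ℝ 0) ^ 2 ∂μ)
        - ∫ ω, (Y ω - ∑ j, a j * SReLU ⟪W j, X ω⟫_ℝ) ^ 2 ∂μ|
      ≤ 2 * M * (∑ j, |a j|) * (Real.sqrt (lam * p) + p)
        + (∑ j, |a j|) ^ 2 * (lam + p) := by
  set E := {ω | C * d < ‖X ω‖ ^ 2}
  have hE : MeasurableSet E := measurableSet_lt measurable_const (hX.norm.pow_const 2)
  have hoff : ∀ j, ∀ ω ∉ E, |⟪W j, X ω⟫_ℝ| ≤ 1 := fun j ω hω =>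
    abs_inner_le_one_of_norm_eq_one_div_sqrt (hW j) (not_lt.1 hω)
  have hind : ∀ j, (fun ω => if C * d < ‖X ω‖ ^ 2 then |⟪W j, X ω⟫_ℝ| ^ 2 else 0)
      = E.indicator fun ω => ⟪W j, X ω⟫_ℝ ^ 2 := fun j => by
    ext ω; simp only [Set.indicator_apply, sq_abs]; rfl
  have hu : ∀ j, MemLp (fun ω => ⟪W j, X ω⟫_ℝ) 2 μ := fun j =>
    memLp_two_of_integrable_indicator_sq (measurable_const.inner hX).aestronglyMeasurable
      (hoff j) (hind j ▸ (hlam (W j) (hW j)).1)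
  have hlamE : ∀ j, ∫ ω in E, ⟪W j, X ω⟫_ℝ ^ 2 ∂μ ≤ lam := fun j => by
    rw [← integral_indicator hE, ← hind j]; exact (hlam (W j) (hW j)).2
  have hM : 0 ≤ M := let ⟨_, hω⟩ := hYbd.exists; (abs_nonneg _).trans hω
  have key := abs_integral_relu_risk_sub_integral_SReLU_risk_le hY.aestronglyMeasurable hYbd hM
    ha hu (fun j ω hω => (le_abs_self _).trans (hoff j ω hω)) hlamE
  rw [measureReal_def, ← hp] at key
  have hp₀ : 0 ≤ p := hp ▸ ENNReal.toReal_nonneg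
  have hA : 0 ≤ ∑ j, a j := sum_nonneg fun j _ => ha j
  rw [sum_congr rfl fun j _ => abs_of_nonneg (ha j)]
  linarith [mul_nonneg (mul_nonneg hM hA) hp₀, mul_nonneg (sq_nonneg (∑ j, a j)) hp₀]

/-- for a network with non-negative output weights and internal weights of
norm `1/√(Cd)`, the population risks computed with the ReLU and with the saturated ReLU
activations differ by at most `2M‖a‖₁(√(λp) + p) + ‖a‖₁²(λ + p)`, where
`p = P(‖X‖² > Cd)` and `λ` bounds the truncated second moments
`E[|wᵀX|² 1{‖X‖² > Cd}]` over `‖w‖ = 1/√(Cd)`. -/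
theorem relu_srelu_population_risk_gap {d : ℕ} {Ω : Type} [MeasurableSpace Ω]
    (μ : Measure Ω) [IsProbabilityMeasure μ]
    (X : Ω → EuclideanSpace ℝ (Fin d)) (Y : Ω → ℝ)
    (hX : Measurable X) (hY : Measurable Y)
    (M C : ℝ) (hM : 0 < M) (hC : 0 < C)
    (hYbd : ∀ᵐ ω ∂μ, |Y ω| ≤ M)
    (p lam : ℝ)
    (hp : p = (μ {ω | C * d < ‖X ω‖ ^ 2}).toReal)
    (hlam : ∀ w : EuclideanSpace ℝ (Fin d), ‖w‖ = 1 / Real.sqrt (C * d) →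
      Integrable (fun ω => if C * d < ‖X ω‖ ^ 2 then |⟪w, X ω⟫_ℝ| ^ 2 else 0) μ ∧
        ∫ ω, (if C * d < ‖X ω‖ ^ 2 then |⟪w, X ω⟫_ℝ| ^ 2 else 0) ∂μ ≤ lam)
    (m : ℕ) (a : Fin m → ℝ) (W : Fin m → EuclideanSpace ℝ (Fin d))
    (ha : ∀ j, 0 ≤ a j) (hW : ∀ j, ‖W j‖ = 1 / Real.sqrt (C * d)) :
    |(∫ ω, (Y ω - ∑ j, a j * max ⟪W j, X ω⟫_ℝ 0) ^ 2 ∂μ)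
        - ∫ ω, (Y ω - ∑ j, a j * SReLU ⟪W j, X ω⟫_ℝ) ^ 2 ∂μ|
      ≤ 2 * M * (∑ j, |a j|) * (Real.sqrt (lam * p) + p)
        + (∑ j, |a j|) ^ 2 * (lam + p) :=
  relu_srelu_population_risk_gap_general μ X Y hX hY M C hYbd p lam hp hlam m a W ha hW
end
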